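/- arXiv:2007.07402 — 3 statements merged into one kernel-verified Lean document; each statement's English description precedes it below -/
import Mathlib

section
/- Let f : (0,∞) → ℝ be a probability density on (0,∞) (f ≥ 0, integrable, ∫_0^∞ f = 1) with finite moment sequence, i.e. ∫_0^∞ x^n f(x) dx < ∞ for every natural number n, and satisfying ∫_0^∞ (−log f(x²))/(1+x²) dx < ∞. Define f* : ℝ → ℝ by f*(x) = |x|·f(x²) for x ≠ 0 (and f*(0) = 0). Then: (i) f* is a probability density on ℝ; (ii) f* has a finite moment sequence, i.e. ∫_ℝ |x|^n f*(x) dx < ∞ for all n; (iii) all odd-order moments of f* vanish: ∫_ℝ x^{2k+1} f*(x) dx = 0 for every natural number k; and (iv) f* has finite logarithmic integral: ∫_ℝ (−log f*(x))/(1+x²) dx < ∞. -/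
/-!
As `f*(x) = φ |x|` with `φ y = y f(y²)`, each integral over `ℝ` in question is twice one over
`(0, ∞)`, where the substitution `u = x²` turns `2x f(x²) dx` into `f(u) du`. This gives the mass and the even moments `∫ |x|^(2m) f* = ∫ u^m f`; the remaining
absolute moments are dominated via `|x|^n ≤ 1 + |x|^(2n)`, and the odd moments vanish by symmetry.
For the logarithmic integral, `-log (x f(x²)) = -log x - log f(x²)`, and `-log x / (1 + x²)` is
integrable near `0` and negative beyond `1`.
-/

open MeasureTheory Filter Set
open scoped ENNReal

section SubstitutionSq

theorem image_sq_Ioi : (fun x : ℝ => x ^ 2) '' Ioi 0 = Ioi 0 := by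
  ext y
  refine ⟨?_, fun hy => ⟨√y, Real.sqrt_pos.mpr hy, Real.sq_sqrt (le_of_lt hy)⟩⟩
  rintro ⟨x, hx, rfl⟩
  exact pow_pos (mem_Ioi.mp hx) 2

theorem injOn_sq_Ioi : InjOn (fun x : ℝ => x ^ 2) (Ioi 0) :=
  (pow_left_strictMonoOn₀ two_ne_zero).injOn.mono Ioi_subset_Ici_self

theorem hasDerivWithinAt_sq (s : Set ℝ) (x : ℝ) :
    HasDerivWithinAt (fun x : ℝ => x ^ 2) (2 * x) s x := by
  simpa using hasDerivWithinAt_pow 2 x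

theorem lintegral_comp_sq_Ioi (g : ℝ → ℝ≥0∞) :
    ∫⁻ x in Ioi 0, ENNReal.ofReal (2 * x) * g (x ^ 2) = ∫⁻ x in Ioi 0, g x := by
  have h := lintegral_image_eq_lintegral_abs_deriv_mul measurableSet_Ioi
    (fun x _ => hasDerivWithinAt_sq _ x) injOn_sq_Ioi g
  rw [image_sq_Ioi] at h
  refine (h.trans (setLIntegral_congr_fun measurableSet_Ioi fun x hx => ?_)).symm
  rw [abs_of_pos (mul_pos two_pos (mem_Ioi.mp hx))]

variable {E : Type*} [NormedAddCommGroup E] [NormedSpace ℝ E]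

theorem integral_comp_sq_Ioi (g : ℝ → E) :
    ∫ x in Ioi 0, (2 * x) • g (x ^ 2) = ∫ x in Ioi 0, g x := by
  have h := integral_image_eq_integral_abs_deriv_smul measurableSet_Ioi
    (fun x _ => hasDerivWithinAt_sq _ x) injOn_sq_Ioi g
  rw [image_sq_Ioi] at h
  refine (h.trans (setIntegral_congr_fun measurableSet_Ioi fun x hx => ?_)).symm
  rw [abs_of_pos (mul_pos two_pos (mem_Ioi.mp hx))]

theorem integrableOn_comp_sq_Ioi_iff (g : ℝ → E) :
    IntegrableOn (fun x => x • g (x ^ 2)) (Ioi 0) ↔ IntegrableOn g (Ioi 0) := by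
  have h := integrableOn_image_iff_integrableOn_abs_deriv_smul measurableSet_Ioi
    (fun x _ => hasDerivWithinAt_sq _ x) injOn_sq_Ioi g
  have h2x : EqOn (fun x => |2 * x| • g (x ^ 2)) (fun x => (2 : ℝ) • x • g (x ^ 2)) (Ioi 0) :=
    fun x hx => by simp only [abs_of_pos (mul_pos two_pos (mem_Ioi.mp hx)), mul_smul]
  rw [image_sq_Ioi, integrableOn_congr_fun h2x measurableSet_Ioi] at h
  exact (integrable_smul_iff two_ne_zero _).symm.trans h.symm

end SubstitutionSq

theorem lintegral_comp_abs (g : ℝ → ℝ≥0∞) : ∫⁻ x, g |x| = 2 * ∫⁻ x in Ioi 0, g x := by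
  have hIoi : ∫⁻ x in Ioi 0, g |x| = ∫⁻ x in Ioi 0, g x :=
    setLIntegral_congr_fun measurableSet_Ioi fun x hx => by rw [abs_of_pos (mem_Ioi.mp hx)]
  have hIic : ∫⁻ x in Iic 0, g |x| = ∫⁻ x in Ioi 0, g x := by
    have h := (Measure.measurePreserving_neg (volume : Measure ℝ)).setLIntegral_comp_preimage_emb
      (Homeomorph.neg ℝ).measurableEmbedding (fun x => g |x|) (Ici 0)
    simp only [abs_neg, neg_preimage, neg_Ici, neg_zero] at h
    rw [h, setLIntegral_congr Ioi_ae_eq_Ici.symm, hIoi]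
  rw [← lintegral_add_compl _ measurableSet_Ioi, compl_Ioi, hIoi, hIic, two_mul]

theorem integrable_comp_abs_iff {E : Type*} [NormedAddCommGroup E] {g : ℝ → E} :
    Integrable (fun x => g |x|) ↔ IntegrableOn g (Ioi 0) := by
  have hIoi : IntegrableOn (fun x => g |x|) (Ioi 0) ↔ IntegrableOn g (Ioi 0) :=
    integrableOn_congr_fun (fun x hx => by rw [abs_of_pos (mem_Ioi.mp hx)]) measurableSet_Ioi
  have hIic : IntegrableOn (fun x => g |x|) (Iic 0) ↔ IntegrableOn g (Ioi 0) := by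
    have h := (Measure.measurePreserving_neg (volume : Measure ℝ)).integrableOn_comp_preimage
      (Homeomorph.neg ℝ).measurableEmbedding (f := fun x => g |x|) (s := Ici 0)
    simp only [Function.comp_def, abs_neg, neg_preimage, neg_Ici, neg_zero] at h
    rw [h, integrableOn_Ici_iff_integrableOn_Ioi, hIoi]
  rw [← integrableOn_univ, ← Iic_union_Ioi (a := (0 : ℝ)), integrableOn_union, hIic, hIoi,
    and_self]

theorem integral_eq_zero_of_odd {G E : Type*} [MeasurableSpace G] [AddGroup G] [MeasurableNeg G]
    [NormedAddCommGroup E] [NormedSpace ℝ E] (μ : Measure G) [μ.IsNegInvariant] {g : G → E}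
    (hodd : ∀ x, g (-x) = -g x) : ∫ x, g x ∂μ = 0 := by
  have h := integral_neg_eq_self g μ
  simp only [hodd, integral_neg] at h
  have h2 : (2 : ℝ) • ∫ x, g x ∂μ = 0 := by
    rw [two_smul]; nth_rw 1 [← h]; exact neg_add_cancel _
  simpa using h2

theorem pow_le_one_add_pow_two_mul {a : ℝ} (ha : 0 ≤ a) (n : ℕ) : a ^ n ≤ 1 + a ^ (2 * n) := by
  rcases le_total a 1 with h | h
  · linarith [pow_le_one₀ ha h (n := n), pow_nonneg ha (2 * n)]
  · linarith [pow_le_pow_right₀ h (by omega : n ≤ 2 * n)]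

theorem lintegral_ofReal_abs_pow_mul_lt_top {μ : Measure ℝ} {g : ℝ → ℝ} (hg : ∀ x, 0 ≤ g x)
    (hgm : AEMeasurable g μ)
    (heven : ∀ m : ℕ, ∫⁻ x, ENNReal.ofReal (|x| ^ (2 * m) * g x) ∂μ < ⊤) (n : ℕ) :
    ∫⁻ x, ENNReal.ofReal (|x| ^ n * g x) ∂μ < ⊤ := by
  have hle : ∀ x, ENNReal.ofReal (|x| ^ n * g x)
      ≤ ENNReal.ofReal (|x| ^ (2 * 0) * g x) + ENNReal.ofReal (|x| ^ (2 * n) * g x) := fun x =>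
    calc ENNReal.ofReal (|x| ^ n * g x)
        ≤ ENNReal.ofReal (|x| ^ (2 * 0) * g x + |x| ^ (2 * n) * g x) := by
          gcongr
          rw [← add_mul, mul_zero, pow_zero]
          exact mul_le_mul_of_nonneg_right (pow_le_one_add_pow_two_mul (abs_nonneg x) n) (hg x)
      _ ≤ _ := ENNReal.ofReal_add_le
  refine (lintegral_mono hle).trans_lt ?_
  rw [lintegral_add_left' (by fun_prop)]
  exact ENNReal.add_lt_top.mpr ⟨heven 0, heven n⟩

theorem ofReal_neg_log_mul_div_le (a b c : ℝ) :
    ENNReal.ofReal (-Real.log (a * b) / c)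
      ≤ ENNReal.ofReal (-Real.log a / c) + ENNReal.ofReal (-Real.log b / c) := by
  rcases eq_or_ne a 0 with rfl | ha
  · simp
  rcases eq_or_ne b 0 with rfl | hb
  · simp
  rw [Real.log_mul ha hb, neg_add, add_div]
  exact ENNReal.ofReal_add_le

theorem lintegral_Ioi_ofReal_neg_log_div_one_add_sq_lt_top :
    ∫⁻ x in Ioi 0, ENNReal.ofReal (-Real.log x / (1 + x ^ 2)) < ⊤ := by
  have hlog : IntegrableOn (fun x => -Real.log x) (Ioc 0 1) :=
    (intervalIntegrable_iff_integrableOn_Ioc_of_le zero_le_one).mp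
      intervalIntegral.intervalIntegrable_log'.neg
  have hle : ∀ x ∈ Ioi (0 : ℝ), ENNReal.ofReal (-Real.log x / (1 + x ^ 2))
      ≤ (Ioc 0 1).indicator (fun x => ENNReal.ofReal (-Real.log x)) x := by
    intro x hx
    rcases le_or_gt x 1 with h1 | h1
    · rw [indicator_of_mem (show x ∈ Ioc 0 1 from ⟨hx, h1⟩)]
      refine ENNReal.ofReal_le_ofReal (div_le_self ?_ (by nlinarith))
      exact neg_nonneg.mpr (Real.log_nonpos (le_of_lt hx) h1)
    · rw [ENNReal.ofReal_eq_zero.mpr]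
      · exact zero_le
      · exact div_nonpos_of_nonpos_of_nonneg (neg_nonpos.mpr (Real.log_nonneg h1.le))
          (by positivity)
  calc ∫⁻ x in Ioi 0, ENNReal.ofReal (-Real.log x / (1 + x ^ 2))
      ≤ ∫⁻ x in Ioi 0, (Ioc 0 1).indicator (fun x => ENNReal.ofReal (-Real.log x)) x :=
        setLIntegral_mono' measurableSet_Ioi hle
    _ ≤ ∫⁻ x, (Ioc 0 1).indicator (fun x => ENNReal.ofReal (-Real.log x)) x :=
        setLIntegral_le_lintegral _ _
    _ = ∫⁻ x in Ioc 0 1, ENNReal.ofReal (-Real.log x) := lintegral_indicator measurableSet_Ioc _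
    _ < ⊤ := hlog.setLIntegral_lt_top

section SqSymm

def sqSymm (f : ℝ → ℝ) (x : ℝ) : ℝ := |x| * f (x ^ 2)

variable {f : ℝ → ℝ}

theorem sqSymm_nonneg (hf : ∀ x ∈ Ioi 0, 0 ≤ f x) (x : ℝ) : 0 ≤ sqSymm f x := by
  rcases eq_or_ne x 0 with rfl | hx
  · simp [sqSymm]
  · exact mul_nonneg (abs_nonneg x) (hf _ (mem_Ioi.mpr (by positivity)))

theorem sqSymm_neg (x : ℝ) : sqSymm f (-x) = sqSymm f x := by
  simp [sqSymm]

theorem integrable_sqSymm (hf : IntegrableOn f (Ioi 0)) : Integrable (sqSymm f) :=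
  (integrable_comp_abs_iff.mpr ((integrableOn_comp_sq_Ioi_iff f).mpr hf)).congr
    (Eventually.of_forall fun x => by simp only [sqSymm, smul_eq_mul, sq_abs])

theorem integral_sqSymm : ∫ x, sqSymm f x = ∫ x in Ioi 0, f x :=
  calc ∫ x, sqSymm f x = 2 * ∫ x in Ioi 0, x * f (x ^ 2) := by
        have h := integral_comp_abs (f := fun x => x * f (x ^ 2))
        simp only [sq_abs] at h
        exact h
    _ = ∫ x in Ioi 0, (2 * x) • f (x ^ 2) := by
        simp only [← integral_const_mul, smul_eq_mul, mul_assoc]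
    _ = ∫ x in Ioi 0, f x := integral_comp_sq_Ioi f

theorem integral_pow_odd_mul_sqSymm (k : ℕ) : ∫ x, x ^ (2 * k + 1) * sqSymm f x = 0 :=
  integral_eq_zero_of_odd volume fun x => by
    rw [sqSymm_neg, (odd_two_mul_add_one k).neg_pow, neg_mul]

theorem lintegral_ofReal_abs_pow_two_mul_mul_sqSymm (m : ℕ) :
    ∫⁻ x, ENNReal.ofReal (|x| ^ (2 * m) * sqSymm f x)
      = ∫⁻ x in Ioi 0, ENNReal.ofReal (x ^ m * f x) :=
  calc ∫⁻ x, ENNReal.ofReal (|x| ^ (2 * m) * sqSymm f x)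
      = 2 * ∫⁻ x in Ioi 0, ENNReal.ofReal (x ^ (2 * m) * (x * f (x ^ 2))) := by
        have h := lintegral_comp_abs fun x => ENNReal.ofReal (x ^ (2 * m) * (x * f (x ^ 2)))
        simp only [sq_abs] at h
        exact h
    _ = ∫⁻ x in Ioi 0, ENNReal.ofReal (2 * x) * ENNReal.ofReal ((x ^ 2) ^ m * f (x ^ 2)) := by
        rw [← lintegral_const_mul' _ _ ENNReal.ofNat_ne_top]
        refine setLIntegral_congr_fun measurableSet_Ioi fun x hx => ?_
        rw [← ENNReal.ofReal_mul (mul_pos two_pos hx).le, ← ENNReal.ofReal_ofNat 2,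
          ← ENNReal.ofReal_mul zero_le_two]
        ring_nf
    _ = ∫⁻ x in Ioi 0, ENNReal.ofReal (x ^ m * f x) :=
        lintegral_comp_sq_Ioi fun x => ENNReal.ofReal (x ^ m * f x)

theorem lintegral_neg_log_sqSymm_le :
    ∫⁻ x, ENNReal.ofReal (-Real.log (sqSymm f x) / (1 + x ^ 2))
      ≤ 2 * ((∫⁻ x in Ioi 0, ENNReal.ofReal (-Real.log x / (1 + x ^ 2)))
        + ∫⁻ x in Ioi 0, ENNReal.ofReal (-Real.log (f (x ^ 2)) / (1 + x ^ 2))) :=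
  calc ∫⁻ x, ENNReal.ofReal (-Real.log (sqSymm f x) / (1 + x ^ 2))
      = 2 * ∫⁻ x in Ioi 0, ENNReal.ofReal (-Real.log (x * f (x ^ 2)) / (1 + x ^ 2)) := by
        have h := lintegral_comp_abs fun x =>
          ENNReal.ofReal (-Real.log (x * f (x ^ 2)) / (1 + x ^ 2))
        simp only [sq_abs] at h
        exact h
    _ ≤ 2 * ∫⁻ x in Ioi 0, (ENNReal.ofReal (-Real.log x / (1 + x ^ 2))
          + ENNReal.ofReal (-Real.log (f (x ^ 2)) / (1 + x ^ 2))) := by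
        gcongr with x
        exact ofReal_neg_log_mul_div_le _ _ _
    _ = _ := by rw [lintegral_add_left (by fun_prop)]

end SqSymm

theorem symmetrized_density_properties
    (f : ℝ → ℝ)
    (hf0 : ∀ x ∈ Set.Ioi (0:ℝ), 0 ≤ f x)
    (hfi : IntegrableOn f (Set.Ioi 0))
    (hf1 : ∫ x in Set.Ioi (0:ℝ), f x = 1)
    (hmom : ∀ n : ℕ, ∫⁻ x in Set.Ioi (0:ℝ), ENNReal.ofReal (x ^ n * f x) < ⊤)
    (hkrein : ∫⁻ x in Set.Ioi (0:ℝ), ENNReal.ofReal (-Real.log (f (x ^ 2)) / (1 + x ^ 2)) < ⊤)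
    (fstar : ℝ → ℝ) (hfstar : ∀ x : ℝ, fstar x = |x| * f (x ^ 2)) :
    ((∀ x : ℝ, 0 ≤ fstar x) ∧ Integrable fstar ∧ ∫ x : ℝ, fstar x = 1) ∧
    (∀ n : ℕ, ∫⁻ x : ℝ, ENNReal.ofReal (|x| ^ n * fstar x) < ⊤) ∧
    (∀ k : ℕ, ∫ x : ℝ, x ^ (2 * k + 1) * fstar x = 0) ∧
    ∫⁻ x : ℝ, ENNReal.ofReal (-Real.log (fstar x) / (1 + x ^ 2)) < ⊤ := by
  obtain rfl : fstar = sqSymm f := funext hfstar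
  have hnonneg := sqSymm_nonneg hf0
  have hint := integrable_sqSymm hfi
  have hmom_even (m : ℕ) := lintegral_ofReal_abs_pow_two_mul_mul_sqSymm m |>.trans_lt (hmom m)
  refine ⟨⟨hnonneg, hint, integral_sqSymm.trans hf1⟩,
    lintegral_ofReal_abs_pow_mul_lt_top hnonneg hint.aemeasurable hmom_even,
    integral_pow_odd_mul_sqSymm, ?_⟩
  refine lintegral_neg_log_sqSymm_le.trans_lt (ENNReal.mul_lt_top ENNReal.ofNat_lt_top ?_)
  exact ENNReal.add_lt_top.mpr ⟨lintegral_Ioi_ofReal_neg_log_div_one_add_sq_lt_top, hkrein⟩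
end

section
/- Fix a natural number n ≥ 1 and define f_n : ℝ → ℝ by f_n(x) = (1/((2n+1)·√π))·|x|^{−2n/(2n+1)}·exp(−|x|^{2/(2n+1)}) for x ≠ 0, and h_s^n : ℝ → ℝ by h_s^n(t) = sgn(t)·sin( π·n/(2n+1) + tan(π/(2n+1))·|t|^{2/(2n+1)} ) for t ≠ 0. Then for every natural number k, the function x ↦ x^k·f_n(x)·h_s^n(x) is Lebesgue integrable on ℝ and ∫_ℝ x^k f_n(x) h_s^n(x) dx = 0. -/
/-!
For `x > 0` the substitution `u = x ^ (2 / (2n+1))` turns the `k`-th moment into a Gamma-type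
integral `∫ u ^ m e^(-u) sin (a + u tan θ)` with `θ = π / (2n+1)` and `a = nθ`. As the imaginary
part of `e^(ia) m! / (1 - i tan θ) ^ (m+1)`, it equals `m! cos^(m+1) θ sin (a + (m+1) θ)`.
The integrand has parity `(-1)^(k+1)`: for even `k` it is odd, and for odd `k = 2j+1` one gets
`m = (2n+1) j + n`, so `a + (m+1) θ = (j+1) π` and the half-line integral vanishes.
-/

open MeasureTheory Filter Set Topology
open Complex (I)
open scoped Real

section GammaIntegral

variable {c : ℂ}

lemma norm_ofReal_pow_mul_cexp_neg_mul {t : ℝ} (ht : 0 ≤ t) (m : ℕ) :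
    ‖(t : ℂ) ^ m * Complex.exp (-(c * t))‖ = t ^ (m : ℝ) * Real.exp (-c.re * t) := by
  rw [norm_mul, norm_pow, Complex.norm_real, Real.norm_of_nonneg ht, Complex.norm_exp,
    Real.rpow_natCast]
  simp

lemma integrableOn_pow_mul_cexp_neg_mul_Ioi (hc : 0 < c.re) (m : ℕ) :
    IntegrableOn (fun t : ℝ => (t : ℂ) ^ m * Complex.exp (-(c * t))) (Ioi 0) := by
  have hbound := integrableOn_rpow_mul_exp_neg_mul_rpow (s := m) (p := 1)
    (by linarith [m.cast_nonneg (α := ℝ)]) one_pos hc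
  simp only [Real.rpow_one] at hbound
  refine hbound.mono' (by fun_prop) ?_
  filter_upwards [ae_restrict_mem measurableSet_Ioi] with t ht
  exact (norm_ofReal_pow_mul_cexp_neg_mul (le_of_lt ht) m).le

lemma tendsto_pow_mul_cexp_neg_mul_atTop (hc : 0 < c.re) (m : ℕ) :
    Tendsto (fun t : ℝ => (t : ℂ) ^ m * Complex.exp (-(c * t))) atTop (𝓝 0) := by
  refine squeeze_zero_norm' ?_ (tendsto_rpow_mul_exp_neg_mul_atTop_nhds_zero m _ hc)
  filter_upwards [eventually_ge_atTop 0] with t ht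
  exact (norm_ofReal_pow_mul_cexp_neg_mul ht m).le

lemma hasDerivAt_cexp_neg_mul (t : ℝ) :
    HasDerivAt (fun t : ℝ => Complex.exp (-(c * t))) (-c * Complex.exp (-(c * t))) t := by
  have h := ((hasDerivAt_id (t : ℂ)).const_mul (-c)).cexp.comp_ofReal
  simpa [mul_comm] using h

lemma integral_pow_succ_mul_cexp_neg_mul_Ioi (hc : 0 < c.re) (m : ℕ) :
    c * ∫ t : ℝ in Ioi 0, (t : ℂ) ^ (m + 1) * Complex.exp (-(c * t)) =
      (m + 1) * ∫ t : ℝ in Ioi 0, (t : ℂ) ^ m * Complex.exp (-(c * t)) := by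
  have hderiv (t : ℝ) : HasDerivAt (fun t : ℝ => (t : ℂ) ^ (m + 1) * Complex.exp (-(c * t)))
      ((m + 1) * ((t : ℂ) ^ m * Complex.exp (-(c * t))) +
        -c * ((t : ℂ) ^ (m + 1) * Complex.exp (-(c * t)))) t := by
    have hpow := (hasDerivAt_pow (m + 1) (t : ℂ)).comp_ofReal
    refine (hpow.mul (hasDerivAt_cexp_neg_mul t)).congr_deriv ?_
    simp only [Nat.add_sub_cancel]
    push_cast
    ring
  have hint := integrableOn_pow_mul_cexp_neg_mul_Ioi hc
  have key := integral_Ioi_of_hasDerivAt_of_tendsto' (fun t _ => hderiv t)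
    (((hint m).const_mul _).add ((hint (m + 1)).const_mul _))
    (tendsto_pow_mul_cexp_neg_mul_atTop hc (m + 1))
  rw [integral_add ((hint m).const_mul _) ((hint (m + 1)).const_mul _),
    integral_const_mul, integral_const_mul] at key
  simp only [Complex.ofReal_zero, zero_pow m.succ_ne_zero, zero_mul, sub_zero] at key
  linear_combination -key

lemma integral_pow_mul_cexp_neg_mul_Ioi (hc : 0 < c.re) (m : ℕ) :
    ∫ t : ℝ in Ioi 0, (t : ℂ) ^ m * Complex.exp (-(c * t)) = m.factorial / c ^ (m + 1) := by
  have hc0 : c ≠ 0 := fun h => by simp [h] at hc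
  induction m with
  | zero =>
    simp only [pow_zero, one_mul, zero_add, Nat.factorial_zero, Nat.cast_one, pow_one]
    simpa [neg_mul] using integral_exp_mul_complex_Ioi (a := -c) (by simpa using hc) 0
  | succ m ih =>
    have h := integral_pow_succ_mul_cexp_neg_mul_Ioi hc m
    rw [ih] at h
    rw [Nat.factorial_succ, eq_div_iff (pow_ne_zero _ hc0)]
    field_simp at h
    push_cast
    linear_combination h

end GammaIntegral

lemma one_sub_tan_mul_I {θ : ℝ} (hθ : Real.cos θ ≠ 0) :
    (1 - Real.tan θ * I : ℂ) = Complex.exp (-(θ * I)) / Real.cos θ := by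
  rw [eq_div_iff (by exact_mod_cast hθ), ← neg_mul, ← Complex.ofReal_neg, Complex.exp_ofReal_mul_I,
    Real.cos_neg, Real.sin_neg, sub_mul, one_mul, mul_right_comm, ← Complex.ofReal_mul,
    Real.tan_mul_cos hθ]
  push_cast
  ring

lemma integral_pow_mul_exp_neg_mul_sin_add_tan_mul_Ioi {θ : ℝ} (hθ : Real.cos θ ≠ 0) (a : ℝ)
    (m : ℕ) :
    ∫ u in Ioi 0, u ^ m * (Real.exp (-u) * Real.sin (a + Real.tan θ * u)) =
      m.factorial * Real.cos θ ^ (m + 1) * Real.sin (a + (m + 1) * θ) := by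
  set c : ℂ := 1 - Real.tan θ * I with hc_def
  have hc : 0 < c.re := by simp [c]
  have hpoint (u : ℝ) : u ^ m * (Real.exp (-u) * Real.sin (a + Real.tan θ * u)) =
      (Complex.exp (a * I) * ((u : ℂ) ^ m * Complex.exp (-(c * u)))).im := by
    have : Complex.exp (a * I) * ((u : ℂ) ^ m * Complex.exp (-(c * u))) =
        ((u ^ m * Real.exp (-u) : ℝ) : ℂ) * Complex.exp ((a + Real.tan θ * u : ℝ) * I) := by
      rw [mul_left_comm, ← Complex.exp_add, Complex.ofReal_mul, Complex.ofReal_exp, mul_assoc,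
        ← Complex.exp_add, hc_def]
      push_cast
      ring_nf
    rw [this, Complex.im_ofReal_mul, Complex.exp_ofReal_mul_I_im, mul_assoc]
  have hvalue : Complex.exp (a * I) * (m.factorial / c ^ (m + 1)) =
      ((m.factorial * Real.cos θ ^ (m + 1) : ℝ) : ℂ) * Complex.exp ((a + (m + 1) * θ : ℝ) * I) := by
    rw [hc_def, one_sub_tan_mul_I hθ, div_pow, ← Complex.exp_nat_mul, div_div_eq_mul_div,
      div_eq_mul_inv _ (Complex.exp _), ← Complex.exp_neg]
    push_cast
    rw [show (a + (m + 1) * θ) * I = a * I + -(((m : ℂ) + 1) * -(θ * I)) by ring, Complex.exp_add]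
    ring
  calc ∫ u in Ioi 0, u ^ m * (Real.exp (-u) * Real.sin (a + Real.tan θ * u))
      = ∫ u : ℝ in Ioi 0,
          Complex.imCLM (Complex.exp (a * I) * ((u : ℂ) ^ m * Complex.exp (-(c * u)))) :=
        integral_congr_ae (ae_of_all _ hpoint)
    _ = (Complex.exp (a * I) * ∫ u : ℝ in Ioi 0, (u : ℂ) ^ m * Complex.exp (-(c * u))).im := by
        rw [Complex.imCLM.integral_comp_comm
          ((integrableOn_pow_mul_cexp_neg_mul_Ioi hc m).const_mul _), integral_const_mul]
        rfl
    _ = _ := by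
        rw [integral_pow_mul_cexp_neg_mul_Ioi hc, hvalue, Complex.im_ofReal_mul,
          Complex.exp_ofReal_mul_I_im]

section Reflection

variable {E : Type*} [NormedAddCommGroup E] [NormedSpace ℝ E] {g : ℝ → E} {ε : ℝ}

lemma integrable_of_comp_neg_eq_smul (hg : ∀ x, g (-x) = ε • g x)
    (hint : IntegrableOn g (Ioi 0)) : Integrable g := by
  have hneg : IntegrableOn (fun x => g (-x)) (Iio 0) := by
    apply IntegrableOn.comp_neg_Iio
    rwa [neg_zero]
  have hIio : IntegrableOn g (Iio 0) :=
    IntegrableOn.congr_fun (hneg.smul ε) (fun x _ => by rw [Pi.smul_apply, ← hg, neg_neg])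
      measurableSet_Iio
  rw [← integrableOn_univ, ← Iic_union_Ioi (a := (0 : ℝ)), integrableOn_union]
  exact ⟨by rwa [integrableOn_Iic_iff_integrableOn_Iio], hint⟩

lemma integral_eq_one_add_smul_setIntegral_Ioi (hg : ∀ x, g (-x) = ε • g x)
    (hint : IntegrableOn g (Ioi 0)) : ∫ x, g x = (1 + ε) • ∫ x in Ioi 0, g x := by
  have hIic : ∫ x in Iic 0, g x = ε • ∫ x in Ioi 0, g x := by
    rw [← neg_zero, ← integral_comp_neg_Ioi, neg_zero]
    simp_rw [hg, integral_smul]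
  rw [← intervalIntegral.integral_Iic_add_Ioi
    (integrable_of_comp_neg_eq_smul hg hint).integrableOn hint, hIic, add_smul, one_smul,
    add_comm]

end Reflection

lemma integral_rpow_mul_comp_rpow_Ioi {E : Type*} [NormedAddCommGroup E] [NormedSpace ℝ E]
    (g : ℝ → E) {q : ℝ} (hq : 0 < q) (s : ℝ) :
    ∫ x in Ioi 0, x ^ (q - 1 + q * s) • g (x ^ q) = q⁻¹ • ∫ u in Ioi 0, u ^ s • g u := by
  rw [← integral_smul]
  refine Eq.trans ?_ (integral_comp_rpow_Ioi_of_pos (g := fun u => q⁻¹ • u ^ s • g u) hq)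
  refine setIntegral_congr_fun measurableSet_Ioi fun x (hx : 0 < x) => ?_
  rw [smul_smul, smul_smul, ← Real.rpow_mul hx.le, Real.rpow_add hx]
  congr 1
  field_simp

lemma cos_pi_div_two_mul_add_one_ne_zero (n : ℕ) : Real.cos (π / (2 * n + 1)) ≠ 0 := by
  rw [Ne, Real.cos_eq_zero_iff]
  rintro ⟨k, hk⟩
  have h2 : (2 : ℤ) = (2 * k + 1) * (2 * n + 1) := by
    field_simp at hk
    have h2 : (2 : ℝ) = (2 * k + 1) * (2 * n + 1) := by linear_combination hk
    exact_mod_cast h2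
  have hodd : Odd ((2 * k + 1) * (2 * n + 1) : ℤ) :=
    (odd_two_mul_add_one k).mul (odd_two_mul_add_one (n : ℤ))
  rw [← h2] at hodd
  exact absurd hodd (by decide)

noncomputable def oddNormalPowerDensity (n : ℕ) (x : ℝ) : ℝ :=
  1 / ((2 * n + 1) * √π) * |x| ^ (-(2 * n : ℝ) / (2 * n + 1)) *
    Real.exp (-|x| ^ (2 / (2 * n + 1 : ℝ)))

noncomputable def sinPerturbation (n : ℕ) (t : ℝ) : ℝ :=
  Real.sign t *
    Real.sin (π * n / (2 * n + 1) + Real.tan (π / (2 * n + 1)) * |t| ^ (2 / (2 * n + 1 : ℝ)))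

section OddNormalPower

variable (n k : ℕ)

lemma pow_mul_oddNormalPowerDensity_mul_sinPerturbation_neg (x : ℝ) :
    (-x) ^ k * oddNormalPowerDensity n (-x) * sinPerturbation n (-x) =
      (-1 : ℝ) ^ (k + 1) • (x ^ k * oddNormalPowerDensity n x * sinPerturbation n x) := by
  simp only [oddNormalPowerDensity, sinPerturbation, abs_neg, Real.sign_neg, neg_pow x,
    smul_eq_mul, pow_succ]
  ring

lemma pow_mul_oddNormalPowerDensity_mul_sinPerturbation_of_pos {x : ℝ} (hx : 0 < x) :
    x ^ k * oddNormalPowerDensity n x * sinPerturbation n x =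
      1 / ((2 * n + 1) * √π) *
        (x ^ ((k : ℝ) - 2 * n / (2 * n + 1)) * Real.exp (-x ^ (2 / (2 * n + 1 : ℝ)))) *
        Real.sin (π * n / (2 * n + 1) +
          Real.tan (π / (2 * n + 1)) * x ^ (2 / (2 * n + 1 : ℝ))) := by
  rw [oddNormalPowerDensity, sinPerturbation, abs_of_pos hx, Real.sign_of_pos hx,
    sub_eq_add_neg, Real.rpow_add hx, Real.rpow_natCast, neg_div]
  ring

lemma integrableOn_Ioi_pow_mul_oddNormalPowerDensity_mul_sinPerturbation :
    IntegrableOn (fun x => x ^ k * oddNormalPowerDensity n x * sinPerturbation n x) (Ioi 0) := by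
  have hq : (0 : ℝ) < 2 / (2 * n + 1) := by positivity
  have hs : -1 < (k : ℝ) - 2 * n / (2 * n + 1) := by
    have : 2 * n / (2 * n + 1) < (1 : ℝ) := by
      rw [div_lt_one (by positivity)]
      linarith
    linarith [k.cast_nonneg (α := ℝ)]
  refine IntegrableOn.congr_fun (((integrableOn_rpow_mul_exp_neg_rpow hs hq).const_mul _).mul_bdd
    (by fun_prop : Measurable _).aestronglyMeasurable
    (ae_of_all _ fun x => Real.abs_sin_le_one _))
    (fun x hx => (pow_mul_oddNormalPowerDensity_mul_sinPerturbation_of_pos n k hx).symm)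
    measurableSet_Ioi

lemma setIntegral_Ioi_pow_mul_oddNormalPowerDensity_mul_sinPerturbation_of_odd (j : ℕ) :
    ∫ x in Ioi 0, x ^ (2 * j + 1) * oddNormalPowerDensity n x * sinPerturbation n x = 0 := by
  set P : ℝ := 2 * n + 1 with hP
  set q : ℝ := 2 / P with hq_def
  set m : ℕ := (2 * n + 1) * j + n with hm
  have hq : 0 < q := by positivity
  have hexp : ((2 * j + 1 : ℕ) : ℝ) - 2 * n / P = q - 1 + q * m := by
    rw [hq_def, hm, hP]
    push_cast
    field_simp
    ring
  have hintegrand : ∀ x ∈ Ioi (0 : ℝ),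
      x ^ (2 * j + 1) * oddNormalPowerDensity n x * sinPerturbation n x =
        1 / (P * √π) * (x ^ (q - 1 + q * m) *
          (Real.exp (-x ^ q) * Real.sin (π * n / P + Real.tan (π / P) * x ^ q))) := by
    intro x hx
    rw [pow_mul_oddNormalPowerDensity_mul_sinPerturbation_of_pos n _ hx, hexp]
    ring
  have hangle : π * n / P + (m + 1) * (π / P) = (j + 1 : ℕ) * π := by
    rw [hm, hP]
    push_cast
    field_simp
    ring
  have hsubst := integral_rpow_mul_comp_rpow_Ioi
    (fun u => Real.exp (-u) * Real.sin (π * n / P + Real.tan (π / P) * u)) hq m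
  simp only [smul_eq_mul, Real.rpow_natCast] at hsubst
  rw [setIntegral_congr_fun measurableSet_Ioi hintegrand, integral_const_mul, hsubst,
    integral_pow_mul_exp_neg_mul_sin_add_tan_mul_Ioi (cos_pi_div_two_mul_add_one_ne_zero n),
    hangle, Real.sin_nat_mul_pi, mul_zero, mul_zero, mul_zero]

end OddNormalPower

theorem moments_vanish_sin_perturbation_odd_normal_power_general
    (n : ℕ) (fn hs : ℝ → ℝ)
    (hfn : ∀ x : ℝ, x ≠ 0 → fn x =
      (1 / ((2 * (n : ℝ) + 1) * Real.sqrt Real.pi)) *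
        |x| ^ (-(2 * (n : ℝ)) / (2 * (n : ℝ) + 1)) *
        Real.exp (-|x| ^ (2 / (2 * (n : ℝ) + 1))))
    (hhs : ∀ t : ℝ, t ≠ 0 → hs t =
      Real.sign t * Real.sin (Real.pi * (n : ℝ) / (2 * (n : ℝ) + 1) +
        Real.tan (Real.pi / (2 * (n : ℝ) + 1)) * |t| ^ (2 / (2 * (n : ℝ) + 1)))) :
    ∀ k : ℕ, Integrable (fun x : ℝ => x ^ k * fn x * hs x) ∧
      ∫ x : ℝ, x ^ k * fn x * hs x = 0 := by
  intro k
  have hae : (fun x => x ^ k * fn x * hs x) =ᵐ[volume]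
      fun x => x ^ k * oddNormalPowerDensity n x * sinPerturbation n x := by
    filter_upwards [Measure.ae_ne volume 0] with x hx
    rw [hfn x hx, hhs x hx, oddNormalPowerDensity, sinPerturbation]
  have hsymm := pow_mul_oddNormalPowerDensity_mul_sinPerturbation_neg n k
  have hIoi := integrableOn_Ioi_pow_mul_oddNormalPowerDensity_mul_sinPerturbation n k
  refine ⟨(integrable_of_comp_neg_eq_smul hsymm hIoi).congr hae.symm, ?_⟩
  rw [integral_congr_ae hae, integral_eq_one_add_smul_setIntegral_Ioi hsymm hIoi, smul_eq_mul]
  rcases Nat.even_or_odd' k with ⟨j, rfl | rfl⟩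
  · rw [pow_succ, pow_mul, neg_one_sq, one_pow]
    ring
  · rw [setIntegral_Ioi_pow_mul_oddNormalPowerDensity_mul_sinPerturbation_of_odd, mul_zero]

theorem moments_vanish_sin_perturbation_odd_normal_power
    (n : ℕ) (hn : 1 ≤ n) (fn hs : ℝ → ℝ)
    (hfn : ∀ x : ℝ, x ≠ 0 → fn x =
      (1 / ((2 * (n : ℝ) + 1) * Real.sqrt Real.pi)) *
        |x| ^ (-(2 * (n : ℝ)) / (2 * (n : ℝ) + 1)) *
        Real.exp (-|x| ^ (2 / (2 * (n : ℝ) + 1))))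
    (hhs : ∀ t : ℝ, t ≠ 0 → hs t =
      Real.sign t * Real.sin (Real.pi * (n : ℝ) / (2 * (n : ℝ) + 1) +
        Real.tan (Real.pi / (2 * (n : ℝ) + 1)) * |t| ^ (2 / (2 * (n : ℝ) + 1)))) :
    ∀ k : ℕ, Integrable (fun x : ℝ => x ^ k * fn x * hs x) ∧
      ∫ x : ℝ, x ^ k * fn x * hs x = 0 :=
  moments_vanish_sin_perturbation_odd_normal_power_general n fn hs hfn hhs
end

section
/- Let n ≥ 1 be a natural number and let X be a real-valued random variable with the normal distribution of mean 0 and variance 1/2. Then the random variable X^{2n+1} is absolutely continuous with probability density f_n(x) = (1/((2n+1)·√π))·|x|^{−2n/(2n+1)}·exp(−|x|^{2/(2n+1)}), x ≠ 0; that is, the pushforward of the N(0,1/2) law under x ↦ x^{2n+1} equals the measure with density f_n with respect to Lebesgue measure on ℝ. Moreover f_n has a finite moment sequence: ∫_ℝ |x|^k f_n(x) dx < ∞ for every natural number k. -/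
/-!
For odd `m` the map `x ↦ x ^ m` is a bijection of `ℝ` whose inverse
`y ↦ sign y * |y| ^ (1 / m)` is differentiable away from `0` with derivative
`|y| ^ (1 / m - 1) / m`. The one-dimensional change of variables formula therefore carries the
Gaussian density `exp (-x ^ 2) / √π` to `f_n`. The moments of `f_n` are the absolute moments
`E |X| ^ ((2n+1) k)` of the Gaussian, hence finite.
-/

open MeasureTheory Set ProbabilityTheory

open scoped ENNReal Topology

theorem map_withDensity_eq_withDensity_abs_deriv_mul {T S S' : ℝ → ℝ} {N : Set ℝ}
    (g : ℝ → ℝ≥0∞) (hT : Measurable T) (hTS : Function.LeftInverse T S)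
    (hST : Function.LeftInverse S T) (hN : N.Countable)
    (hS' : ∀ y ∉ N, HasDerivAt S (S' y) y) :
    (volume.withDensity g).map T =
      volume.withDensity fun y => ENNReal.ofReal |S' y| * g (S y) := by
  ext s hs
  rw [Measure.map_apply hT hs, withDensity_apply _ (hT hs), withDensity_apply _ hs,
    ← image_eq_preimage_of_inverse hTS hST]
  calc ∫⁻ x in S '' s, g x = ∫⁻ x in S '' (s \ N), g x := by
        refine setLIntegral_congr ?_
        rw [image_sdiff hTS.injective]
        exact (sdiff_ae_eq_self.mpr (measure_mono_null inter_subset_right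
          ((hN.image S).measure_zero volume))).symm
    _ = ∫⁻ y in s \ N, ENNReal.ofReal |S' y| * g (S y) :=
        lintegral_image_eq_lintegral_abs_deriv_mul (hs.diff hN.measurableSet)
          (fun y hy => (hS' y hy.2).hasDerivWithinAt) hTS.injective.injOn g
    _ = ∫⁻ y in s, ENNReal.ofReal |S' y| * g (S y) :=
        setLIntegral_congr (sdiff_ae_eq_self.mpr
          (measure_mono_null inter_subset_right (hN.measure_zero volume)))

noncomputable def oddRoot (m : ℕ) (y : ℝ) : ℝ := SignType.sign y * |y| ^ (m⁻¹ : ℝ)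

theorem oddRoot_pow {m : ℕ} (hm : Odd m) (y : ℝ) : oddRoot m y ^ m = y := by
  rw [oddRoot, mul_pow, Real.rpow_inv_natCast_pow (abs_nonneg y) hm.pos.ne',
    ← SignType.coe_pow, SignType.pow_odd _ hm, sign_mul_abs]

theorem oddRoot_pow_self {m : ℕ} (hm : Odd m) (x : ℝ) : oddRoot m (x ^ m) = x :=
  hm.pow_injective (oddRoot_pow hm _)

theorem sq_oddRoot (m : ℕ) {y : ℝ} (hy : y ≠ 0) : oddRoot m y ^ 2 = |y| ^ (2 / m : ℝ) := by
  have hsign : (SignType.sign y : ℝ) ^ 2 = 1 := by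
    rcases hy.lt_or_gt with hy | hy <;> simp [sign_neg, sign_pos, hy]
  rw [oddRoot, mul_pow, hsign, one_mul, ← Real.rpow_natCast, ← Real.rpow_mul (abs_nonneg y)]
  ring_nf

theorem hasDerivAt_oddRoot (m : ℕ) {y : ℝ} (hy : y ≠ 0) :
    HasDerivAt (oddRoot m) ((m : ℝ)⁻¹ * |y| ^ ((m : ℝ)⁻¹ - 1)) y := by
  rcases hy.lt_or_gt with hy | hy
  · have h : oddRoot m =ᶠ[𝓝 y] fun z => -(-z) ^ (m⁻¹ : ℝ) := by
      filter_upwards [eventually_lt_nhds hy] with z hz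
      simp [oddRoot, sign_neg hz, abs_of_neg hz]
    have hroot :=
      ((hasDerivAt_neg y).rpow_const (p := (m⁻¹ : ℝ)) (Or.inl (neg_ne_zero.mpr hy.ne))).neg
    refine (hroot.congr_of_eventuallyEq h).congr_deriv ?_
    rw [abs_of_neg hy]
    ring
  · have h : oddRoot m =ᶠ[𝓝 y] fun z => z ^ (m⁻¹ : ℝ) := by
      filter_upwards [eventually_gt_nhds hy] with z hz
      simp [oddRoot, sign_pos hz, abs_of_pos hz]
    rw [abs_of_pos hy]
    exact (Real.hasDerivAt_rpow_const (Or.inl hy.ne')).congr_of_eventuallyEq h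

theorem map_pow_withDensity_of_odd {m : ℕ} (hm : Odd m) (g : ℝ → ℝ≥0∞) :
    (volume.withDensity g).map (· ^ m) = volume.withDensity fun y =>
      ENNReal.ofReal ((m : ℝ)⁻¹ * |y| ^ ((m : ℝ)⁻¹ - 1)) * g (oddRoot m y) := by
  have habs (y : ℝ) :
      |(m : ℝ)⁻¹ * |y| ^ ((m : ℝ)⁻¹ - 1)| = (m : ℝ)⁻¹ * |y| ^ ((m : ℝ)⁻¹ - 1) :=
    abs_of_nonneg (by positivity)
  simpa only [habs] using map_withDensity_eq_withDensity_abs_deriv_mul (S := oddRoot m) g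
    (continuous_pow m).measurable (oddRoot_pow hm) (oddRoot_pow_self hm) (countable_singleton 0)
    (fun y hy => hasDerivAt_oddRoot m hy)

theorem gaussianPDFReal_zero_half (x : ℝ) :
    gaussianPDFReal 0 (1 / 2) x = Real.exp (-x ^ 2) / Real.sqrt Real.pi := by
  rw [gaussianPDFReal]
  norm_num
  field_simp

noncomputable def oddPowGaussianDensity (n : ℕ) (x : ℝ) : ℝ :=
  1 / ((2 * (n : ℝ) + 1) * Real.sqrt Real.pi) * |x| ^ (-(2 * (n : ℝ)) / (2 * (n : ℝ) + 1)) *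
    Real.exp (-|x| ^ (2 / (2 * (n : ℝ) + 1)))

theorem measurable_oddPowGaussianDensity (n : ℕ) : Measurable (oddPowGaussianDensity n) := by
  unfold oddPowGaussianDensity
  fun_prop

theorem ofReal_mul_gaussianPDF_oddRoot (n : ℕ) {y : ℝ} (hy : y ≠ 0) :
    ENNReal.ofReal (((2 * n + 1 : ℕ) : ℝ)⁻¹ * |y| ^ (((2 * n + 1 : ℕ) : ℝ)⁻¹ - 1)) *
        gaussianPDF 0 (1 / 2) (oddRoot (2 * n + 1) y) =
      ENNReal.ofReal (oddPowGaussianDensity n y) := by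
  rw [gaussianPDF, gaussianPDFReal_zero_half, sq_oddRoot _ hy,
    ← ENNReal.ofReal_mul (by positivity), oddPowGaussianDensity]
  congr 1
  have hm : (2 * (n : ℝ) + 1) ≠ 0 := by positivity
  push_cast
  have hexp : (2 * (n : ℝ) + 1)⁻¹ - 1 = -(2 * (n : ℝ)) / (2 * (n : ℝ) + 1) := by
    field_simp
    ring
  rw [hexp]
  field_simp

theorem map_pow_gaussianReal_eq_withDensity (n : ℕ) :
    (gaussianReal 0 (1 / 2)).map (· ^ (2 * n + 1)) =
      volume.withDensity fun x => ENNReal.ofReal (oddPowGaussianDensity n x) := by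
  rw [gaussianReal_of_var_ne_zero 0 (by norm_num),
    map_pow_withDensity_of_odd (odd_two_mul_add_one n)]
  refine withDensity_congr_ae ?_
  filter_upwards [Measure.ae_ne volume 0] with y hy
  exact ofReal_mul_gaussianPDF_oddRoot n hy

theorem lintegral_ofReal_abs_pow_mul_oddPowGaussianDensity_lt_top (n k : ℕ) :
    ∫⁻ x, ENNReal.ofReal (|x| ^ k * oddPowGaussianDensity n x) < ⊤ := by
  have hgauss : Integrable (fun x => |x| ^ ((2 * n + 1) * k)) (gaussianReal 0 (1 / 2)) := by
    simpa using (memLp_id_gaussianReal' (μ := 0) (v := 1 / 2)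
      (((2 * n + 1) * k : ℕ) : ℝ≥0∞) (ENNReal.natCast_ne_top _)).integrable_norm_pow'
  have hmoment : Integrable (fun x => |x| ^ k)
      (volume.withDensity fun x => ENNReal.ofReal (oddPowGaussianDensity n x)) := by
    rw [← map_pow_gaussianReal_eq_withDensity, integrable_map_measure (by fun_prop) (by fun_prop)]
    simpa [Function.comp_def, abs_pow, ← pow_mul] using hgauss
  calc ∫⁻ x, ENNReal.ofReal (|x| ^ k * oddPowGaussianDensity n x)
      = ∫⁻ x, ENNReal.ofReal (|x| ^ k)
          ∂volume.withDensity fun x => ENNReal.ofReal (oddPowGaussianDensity n x) := by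
        rw [lintegral_withDensity_eq_lintegral_mul _
          (measurable_oddPowGaussianDensity n).ennreal_ofReal (by fun_prop)]
        congr with x
        rw [Pi.mul_apply, ENNReal.ofReal_mul (by positivity), mul_comm]
    _ < ⊤ := hmoment.lintegral_lt_top

theorem odd_power_of_normal_has_density_general
    (n : ℕ) (fn : ℝ → ℝ)
    (hfn : ∀ x : ℝ, x ≠ 0 → fn x =
      (1 / ((2 * (n : ℝ) + 1) * Real.sqrt Real.pi)) *
        |x| ^ (-(2 * (n : ℝ)) / (2 * (n : ℝ) + 1)) *
        Real.exp (-|x| ^ (2 / (2 * (n : ℝ) + 1)))) :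
    (Measure.map (fun x : ℝ => x ^ (2 * n + 1)) (gaussianReal 0 (1 / 2)) =
      volume.withDensity (fun x : ℝ => ENNReal.ofReal (fn x))) ∧
    ∀ k : ℕ, ∫⁻ x : ℝ, ENNReal.ofReal (|x| ^ k * fn x) < ⊤ := by
  have hfn_ae : fn =ᵐ[volume] oddPowGaussianDensity n := by
    filter_upwards [Measure.ae_ne volume 0] with x hx
    exact hfn x hx
  refine ⟨?_, fun k => ?_⟩
  · rw [map_pow_gaussianReal_eq_withDensity]
    exact withDensity_congr_ae (hfn_ae.fun_comp ENNReal.ofReal).symm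
  · calc ∫⁻ x, ENNReal.ofReal (|x| ^ k * fn x)
        = ∫⁻ x, ENNReal.ofReal (|x| ^ k * oddPowGaussianDensity n x) := by
          refine lintegral_congr_ae ?_
          filter_upwards [hfn_ae] with x hx
          rw [hx]
      _ < ⊤ := lintegral_ofReal_abs_pow_mul_oddPowGaussianDensity_lt_top n k

theorem odd_power_of_normal_has_density
    (n : ℕ) (hn : 1 ≤ n) (fn : ℝ → ℝ)
    (hfn : ∀ x : ℝ, x ≠ 0 → fn x =
      (1 / ((2 * (n : ℝ) + 1) * Real.sqrt Real.pi)) *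
        |x| ^ (-(2 * (n : ℝ)) / (2 * (n : ℝ) + 1)) *
        Real.exp (-|x| ^ (2 / (2 * (n : ℝ) + 1)))) :
    (Measure.map (fun x : ℝ => x ^ (2 * n + 1)) (gaussianReal 0 (1 / 2)) =
      volume.withDensity (fun x : ℝ => ENNReal.ofReal (fn x))) ∧
    ∀ k : ℕ, ∫⁻ x : ℝ, ENNReal.ofReal (|x| ^ k * fn x) < ⊤ :=
  odd_power_of_normal_has_density_general n fn hfn
end
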